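/- arXiv:2407.11123 — 8 statements merged into one kernel-verified Lean document; each statement's English description precedes it below -/
import Mathlib

section
/- For a unitary channel E = Ad_U on a finite-dimensional Hilbert space with inverse channel E⁻¹ = Ad_{U†}, and any density matrix ρ, and dichotomic observables A = 2P - 1 and B = 2Q - 1 (with P, Q orthogonal projections), the two-time expectation value Tr[E(PρP - P⊥ρP⊥)(2Q - 1)] equals Tr[E⁻¹(Q E(ρ) Q - Q⊥ E(ρ) Q⊥)(2P - 1)], where P⊥ = 1 - P and Q⊥ = 1 - Q. -/
open Matrix
open scoped ComplexOrder

/-- For a unitary channel `E = Ad_U` with inverse `E⁻¹ = Ad_{U†}`, any density matrix `ρ`,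
and dichotomic observables `2P - 1`, `2Q - 1` (with `P`, `Q` orthogonal projections), the
two-time expectation value of `2P-1` followed by `2Q-1` under `(E, ρ)` equals that of
`2Q-1` followed by `2P-1` under `(E⁻¹, E(ρ))`. -/
theorem unitary_two_time_symmetry {n : ℕ} (U ρ P Q : Matrix (Fin n) (Fin n) ℂ)
    (hU : U ∈ Matrix.unitaryGroup (Fin n) ℂ)
    (hρ : ρ.PosSemidef) (hρtr : ρ.trace = 1)
    (hP : P * P = P) (hPh : Pᴴ = P) (hQ : Q * Q = Q) (hQh : Qᴴ = Q) :
    Matrix.trace ((U * (P * ρ * P - (1 - P) * ρ * (1 - P)) * Uᴴ) * ((2 : ℂ) • Q - 1))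
      = Matrix.trace
          ((Uᴴ * (Q * (U * ρ * Uᴴ) * Q - (1 - Q) * (U * ρ * Uᴴ) * (1 - Q)) * U)
            * ((2 : ℂ) • P - 1)) := by
  have h1 : Uᴴ * U = 1 := by
    have := hU.1
    simpa [Matrix.star_eq_conjTranspose] using this
  have h2 : U * Uᴴ = 1 := by
    have := hU.2
    simpa [Matrix.star_eq_conjTranspose] using this
  have e1 : P * ρ * P - (1 - P) * ρ * (1 - P) = P * ρ + ρ * P - ρ := by noncomm_ring
  have e2 : Q * (U * ρ * Uᴴ) * Q - (1 - Q) * (U * ρ * Uᴴ) * (1 - Q)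
      = Q * (U * ρ * Uᴴ) + (U * ρ * Uᴴ) * Q - (U * ρ * Uᴴ) := by noncomm_ring
  rw [e1, e2]
  simp only [Matrix.mul_sub, Matrix.sub_mul, Matrix.mul_add, Matrix.add_mul,
    Matrix.mul_smul, Matrix.smul_mul, Matrix.mul_one, Matrix.one_mul,
    Matrix.trace_sub, Matrix.trace_add, Matrix.trace_smul, Matrix.mul_assoc,
    h1, h2]
  have hA : ∀ X : Matrix (Fin n) (Fin n) ℂ, Uᴴ * (U * X) = X := by
    intro X; rw [← Matrix.mul_assoc, h1, Matrix.one_mul]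
  have hB : ∀ X : Matrix (Fin n) (Fin n) ℂ, U * (Uᴴ * X) = X := by
    intro X; rw [← Matrix.mul_assoc, h2, Matrix.one_mul]
  simp only [hA, hB]
  simp only [Matrix.trace_mul_comm U, Matrix.mul_assoc]
  simp only [h1, Matrix.mul_one]
  simp only [Matrix.trace_mul_comm U, Matrix.trace_mul_comm Uᴴ, Matrix.trace_mul_comm P, Matrix.trace_mul_comm Q, Matrix.mul_assoc, hA, hB]
  simp only [smul_eq_mul]
  ring
end

section
/- For any linear map E : M_n(ℂ) → M_m(ℂ), orthonormal basis {|i⟩} of ℂⁿ, and state ρ and observable B on the respective spaces, the two-time expectation value of a dichotomic observable A = 2P - 1 followed by a light-touch observable B with respect to (E, ρ) equals Tr[(E ⋆ ρ)(A ⊗ B)], where E ⋆ ρ = ½{ρ ⊗ 1, J[E]} with J[E] = Σ_{i,j} |i⟩⟨j| ⊗ E(|j⟩⟨i|). -/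
open Matrix
open scoped Kronecker

noncomputable section

/-- The Jamiolkowski matrix `J[E] = ∑ i j, |i⟩⟨j| ⊗ E(|j⟩⟨i|)`. -/
def Jam {n m : ℕ} (E : Matrix (Fin n) (Fin n) ℂ → Matrix (Fin m) (Fin m) ℂ) :
    Matrix (Fin n × Fin m) (Fin n × Fin m) ℂ :=
  ∑ i : Fin n, ∑ j : Fin n,
    (Matrix.single i j (1 : ℂ)) ⊗ₖ E (Matrix.single j i (1 : ℂ))

/-- The spatiotemporal product `E ⋆ ρ = ½{ρ ⊗ 1, J[E]}`. -/
def sot {n m : ℕ} (E : Matrix (Fin n) (Fin n) ℂ → Matrix (Fin m) (Fin m) ℂ)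
    (ρ : Matrix (Fin n) (Fin n) ℂ) : Matrix (Fin n × Fin m) (Fin n × Fin m) ℂ :=
  (1 / 2 : ℂ) • ((ρ ⊗ₖ (1 : Matrix (Fin m) (Fin m) ℂ)) * Jam E
      + Jam E * (ρ ⊗ₖ (1 : Matrix (Fin m) (Fin m) ℂ)))

/-- The swap map `S(σ ⊗ τ) = τ ⊗ σ` on matrix algebras. -/
def swapM {m n : ℕ} (X : Matrix (Fin m × Fin n) (Fin m × Fin n) ℂ) :
    Matrix (Fin n × Fin m) (Fin n × Fin m) ℂ :=
  X.submatrix (fun p => (p.2, p.1)) (fun p => (p.2, p.1))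

/-- The Choi matrix `C[E] = ∑ i j, |i⟩⟨j| ⊗ E(|i⟩⟨j|)`. -/
def ChoiM {n m : ℕ} (E : Matrix (Fin n) (Fin n) ℂ → Matrix (Fin m) (Fin m) ℂ) :
    Matrix (Fin n × Fin m) (Fin n × Fin m) ℂ :=
  ∑ i : Fin n, ∑ j : Fin n,
    (Matrix.single i j (1 : ℂ)) ⊗ₖ E (Matrix.single i j (1 : ℂ))
open scoped ComplexOrder

/-! The Jamiołkowski matrix reproduces the map under the trace pairing,
`Tr[J[E] (X ⊗ B)] = Tr[E(X) B]`, so `Tr[(E ⋆ ρ)(A ⊗ B)] = Tr[E(½{A, ρ}) B]`. On the other side,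
`PρP - P⊥ρP⊥ = Pρ + ρP - ρ`, which is exactly `½{2P - 1, ρ}`; linearity of `E` and of the trace
finishes the proof. -/

lemma trace_Jam_mul_kronecker {n m : ℕ}
    (E : Matrix (Fin n) (Fin n) ℂ →ₗ[ℂ] Matrix (Fin m) (Fin m) ℂ)
    (X : Matrix (Fin n) (Fin n) ℂ) (B : Matrix (Fin m) (Fin m) ℂ) :
    trace (Jam E * (X ⊗ₖ B)) = trace (E X * B) := by
  calc trace (Jam E * (X ⊗ₖ B))
      = ∑ i : Fin n, ∑ j : Fin n, X j i * trace (E (single j i 1) * B) := by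
        simp only [Jam, Finset.sum_mul, trace_sum, ← mul_kronecker_mul, trace_kronecker,
          trace_single_mul, one_smul]
    _ = trace (E X * B) := by
        conv_rhs => rw [matrix_eq_sum_single X]
        simp only [map_sum, Finset.sum_mul, trace_sum]
        rw [Finset.sum_comm]
        refine Finset.sum_congr rfl fun j _ => Finset.sum_congr rfl fun i _ => ?_
        rw [show single j i (X j i) = X j i • single j i 1 by simp, map_smul, smul_mul,
          trace_smul, smul_eq_mul]

lemma trace_sot_mul_kronecker {n m : ℕ}
    (E : Matrix (Fin n) (Fin n) ℂ →ₗ[ℂ] Matrix (Fin m) (Fin m) ℂ)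
    (ρ A : Matrix (Fin n) (Fin n) ℂ) (B : Matrix (Fin m) (Fin m) ℂ) :
    trace (sot E ρ * (A ⊗ₖ B)) = trace (E ((1 / 2 : ℂ) • (A * ρ + ρ * A)) * B) := by
  have h₁ : trace (ρ ⊗ₖ 1 * Jam E * (A ⊗ₖ B)) = trace (E (A * ρ) * B) := by
    rw [mul_assoc, trace_mul_comm, mul_assoc, ← mul_kronecker_mul, mul_one,
      trace_Jam_mul_kronecker]
  have h₂ : trace (Jam E * ρ ⊗ₖ 1 * (A ⊗ₖ B)) = trace (E (ρ * A) * B) := by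
    rw [mul_assoc, ← mul_kronecker_mul, one_mul, trace_Jam_mul_kronecker]
  rw [sot, smul_mul, add_mul, trace_smul, trace_add, h₁, h₂, map_smul, map_add, smul_mul,
    add_mul, trace_smul, trace_add]

lemma sandwich_sub_sandwich_one_sub {R : Type*} [Ring R] (P ρ : R) :
    P * ρ * P - (1 - P) * ρ * (1 - P) = P * ρ + ρ * P - ρ := by
  noncomm_ring

theorem two_time_eq_sot_trace_general {n m : ℕ}
    (E : Matrix (Fin n) (Fin n) ℂ →ₗ[ℂ] Matrix (Fin m) (Fin m) ℂ)
    (ρ P : Matrix (Fin n) (Fin n) ℂ) (B : Matrix (Fin m) (Fin m) ℂ) :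
    Matrix.trace (E (P * ρ * P) * B) - Matrix.trace (E ((1 - P) * ρ * (1 - P)) * B)
      = Matrix.trace (sot (⇑E) ρ * (((2 : ℂ) • P - 1) ⊗ₖ B)) := by
  rw [trace_sot_mul_kronecker, ← trace_sub, ← sub_mul, ← map_sub,
    sandwich_sub_sandwich_one_sub]
  have half_anticomm : (1 / 2 : ℂ) • (((2 : ℂ) • P - 1) * ρ + ρ * ((2 : ℂ) • P - 1))
      = P * ρ + ρ * P - ρ := by
    simp only [sub_mul, mul_sub, smul_mul_assoc, mul_smul_comm, one_mul, mul_one]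
    module
  rw [half_anticomm]

/-- The two-time expectation value of a dichotomic observable `A = 2P - 1` followed by a
light-touch observable `B` with respect to `(E, ρ)` equals `Tr[(E ⋆ ρ)(A ⊗ B)]`. -/
theorem two_time_eq_sot_trace {n m : ℕ}
    (E : Matrix (Fin n) (Fin n) ℂ →ₗ[ℂ] Matrix (Fin m) (Fin m) ℂ)
    (ρ P : Matrix (Fin n) (Fin n) ℂ) (B : Matrix (Fin m) (Fin m) ℂ)
    (hρ : ρ.PosSemidef) (hρtr : ρ.trace = 1)
    (hP : P * P = P) (hPh : Pᴴ = P)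
    (hB : Bᴴ = B)
    (hBlt : ∃ lam : ℝ, B * B = ((lam ^ 2 : ℝ) : ℂ) • (1 : Matrix (Fin m) (Fin m) ℂ)) :
    Matrix.trace (E (P * ρ * P) * B) - Matrix.trace (E ((1 - P) * ρ * (1 - P)) * B)
      = Matrix.trace (sot (⇑E) ρ * (((2 : ℂ) • P - 1) ⊗ₖ B)) :=
  two_time_eq_sot_trace_general E ρ P B
end
end

section
/- The real vector space of Hermitian n×n complex matrices admits a basis consisting entirely of light-touch observables, i.e., Hermitian matrices whose set of distinct eigenvalues is either {λ} or {λ, -λ} for some real λ. -/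
open Matrix

noncomputable section

/-- A light-touch observable: a Hermitian matrix whose set of distinct eigenvalues is of
the form `{λ}` or `{λ, -λ}` for some real `λ`; equivalently (for Hermitian matrices),
`A² = λ² • 1`. -/
def LightTouch {n : ℕ} (A : Matrix (Fin n) (Fin n) ℂ) : Prop :=
  A.IsHermitian ∧ ∃ lam : ℝ, A * A = ((lam ^ 2 : ℝ) : ℂ) • (1 : Matrix (Fin n) (Fin n) ℂ)

namespace LTaux

lemma diag_mul_std {n : ℕ} (d : Fin n → ℂ) (i j : Fin n) (a : ℂ) :
    Matrix.diagonal d * Matrix.single i j a = Matrix.single i j (d i * a) := by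
  ext p q
  simp only [Matrix.mul_apply, Matrix.diagonal_apply, Matrix.single, Matrix.of_apply,
    ite_mul, zero_mul, mul_ite, mul_zero, ← ite_and]
  rw [Finset.sum_eq_single p]
  · by_cases hp : p = i <;> by_cases hq : q = j <;> simp_all
  · intro b _ hb; simp [hb, Ne.symm hb]
  · simp

lemma std_mul_diag {n : ℕ} (d : Fin n → ℂ) (i j : Fin n) (a : ℂ) :
    Matrix.single i j a * Matrix.diagonal d = Matrix.single i j (a * d j) := by
  ext p q
  simp only [Matrix.mul_apply, Matrix.diagonal_apply, Matrix.single, Matrix.of_apply,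
    ite_mul, zero_mul, mul_ite, mul_zero, ← ite_and]
  rw [Finset.sum_eq_single q]
  · by_cases hp : p = i <;> by_cases hq : q = j <;> simp_all
  · intro b _ hb; simp [hb]
  · simp

lemma conjT_std {n : ℕ} (i j : Fin n) (c : ℂ) :
    (Matrix.single i j c)ᴴ = Matrix.single j i (star c) := by
  ext p q
  simp only [Matrix.conjTranspose_apply, Matrix.single, Matrix.of_apply]
  by_cases hp : p = j <;> by_cases hq : q = i <;>
    simp_all [and_comm, apply_ite (starRingEnd ℂ)]

lemma sq_eq_one {n : ℕ} (d : Fin n → ℂ) (i j : Fin n) (hij : i ≠ j) (a : ℂ)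
    (hdi : d i = 0) (hdj : d j = 0) (ha : a * star a = 1)
    (hd : ∀ l, l ≠ i → l ≠ j → d l * d l = 1) :
    (Matrix.diagonal d + Matrix.single i j a + Matrix.single j i (star a)) *
    (Matrix.diagonal d + Matrix.single i j a + Matrix.single j i (star a)) = 1 := by
  have h1 : star a * a = 1 := by rw [mul_comm] at ha; exact ha
  have e1 : Matrix.single i j a * Matrix.single i j a = (0 : Matrix (Fin n) (Fin n) ℂ) :=
    Matrix.single_mul_single_of_ne (c := a) i j i (Ne.symm hij) a
  have e2 : Matrix.single j i (star a) * Matrix.single j i (star a)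
      = (0 : Matrix (Fin n) (Fin n) ℂ) :=
    Matrix.single_mul_single_of_ne (c := star a) j i j hij (star a)
  rw [add_mul, add_mul, mul_add, mul_add, mul_add, mul_add, mul_add, mul_add]
  simp only [Matrix.diagonal_mul_diagonal, diag_mul_std, std_mul_diag,
    Matrix.single_mul_single_same, e1, e2,
    hdi, hdj, ha, h1, zero_mul, mul_zero, Matrix.single_zero, add_zero, zero_add]
  ext p q
  by_cases hpq : p = q
  · subst hpq
    by_cases hp : p = i
    · subst hp; simp [Matrix.one_apply, hij, Ne.symm hij, hdi]
    · by_cases hq : p = j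
      · subst hq; simp [Matrix.one_apply, Ne.symm hij, hij, hdj]
      · simp [Matrix.one_apply, hp, hq, Ne.symm hp, Ne.symm hq, hd p hp hq]
  · have h0 : ∀ u : Fin n, Matrix.single u u (1:ℂ) p q = 0 := fun u => by
      apply Matrix.single_apply_of_ne
      rintro ⟨rfl, rfl⟩; exact hpq rfl
    simp [Matrix.one_apply, hpq, Matrix.diagonal_apply_ne _ hpq, h0]

/-- diagonal sign vector -/
def dvec {n : ℕ} (k : Fin n) : Fin n → ℂ := fun l => if l < k then -1 else 1

/-- diagonal vector vanishing at `i, j` -/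
def offd {n : ℕ} (i j : Fin n) : Fin n → ℂ := fun l => if l = i ∨ l = j then 0 else 1

/-- off-diagonal coefficient -/
def cval {n : ℕ} (i j : Fin n) : ℂ := if i < j then 1 else Complex.I

/-- the light-touch family, indexed by pairs -/
def Bmat {n : ℕ} (p : Fin n × Fin n) : Matrix (Fin n) (Fin n) ℂ :=
  if p.1 = p.2 then Matrix.diagonal (dvec p.1)
  else Matrix.diagonal (offd p.1 p.2) + Matrix.single p.1 p.2 (cval p.1 p.2)
       + Matrix.single p.2 p.1 (star (cval p.1 p.2))

lemma cval_mul_star {n : ℕ} (i j : Fin n) : cval i j * star (cval i j) = 1 := by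
  unfold cval
  split_ifs <;> simp [Complex.star_def, Complex.conj_I, Complex.I_mul_I]

lemma lightTouch_Bmat {n : ℕ} (p : Fin n × Fin n) :
    (Bmat p).IsHermitian ∧ Bmat p * Bmat p = (1 : Matrix (Fin n) (Fin n) ℂ) := by
  obtain ⟨i, j⟩ := p
  by_cases hij : i = j
  · subst hij
    have hB : Bmat (i, i) = Matrix.diagonal (dvec i) := if_pos rfl
    rw [hB]
    constructor
    · apply Matrix.isHermitian_diagonal_of_self_adjoint
      funext l
      simp only [Pi.star_apply, dvec]
      split_ifs <;> simp
    · rw [Matrix.diagonal_mul_diagonal]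
      have : (fun l => dvec i l * dvec i l) = (fun _ : Fin n => (1:ℂ)) := by
        funext l; simp only [dvec]; split_ifs <;> ring
      rw [this, Matrix.diagonal_one]
  · have hB : Bmat (i, j) = Matrix.diagonal (offd i j) + Matrix.single i j (cval i j)
        + Matrix.single j i (star (cval i j)) := if_neg hij
    rw [hB]
    have hoffd : star (offd i j) = offd i j := by
      funext l
      simp only [Pi.star_apply, offd]
      split_ifs <;> simp
    constructor
    · show _ᴴ = _
      rw [Matrix.conjTranspose_add, Matrix.conjTranspose_add, conjT_std, conjT_std, star_star,
        Matrix.diagonal_conjTranspose, hoffd]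
      abel
    · apply sq_eq_one _ _ _ hij
      · simp [offd]
      · simp [offd]
      · exact cval_mul_star i j
      · intro l hli hlj
        simp only [offd, if_neg (by tauto : ¬(l = i ∨ l = j))]
        ring


/-- the span of the family -/
def V (n : ℕ) : Submodule ℝ (Matrix (Fin n) (Fin n) ℂ) :=
  Submodule.span ℝ (Set.range (Bmat (n := n)))

variable {n : ℕ}

lemma Bmat_mem (p : Fin n × Fin n) : Bmat p ∈ V n :=
  Submodule.subset_span ⟨p, rfl⟩

lemma one_mem_V : (1 : Matrix (Fin n) (Fin n) ℂ) ∈ V n := by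
  rcases Nat.eq_zero_or_pos n with h | h
  · subst h
    have : (1 : Matrix (Fin 0) (Fin 0) ℂ) = 0 := by ext i; exact i.elim0
    rw [this]; exact zero_mem _
  · have hB : Bmat ((⟨0, h⟩ : Fin n), (⟨0, h⟩ : Fin n)) = Matrix.diagonal (dvec ⟨0, h⟩) :=
      if_pos rfl
    have hd : dvec (⟨0, h⟩ : Fin n) = fun _ => (1 : ℂ) := by
      funext l
      simp only [dvec]
      rw [if_neg]
      exact fun hc => Nat.not_lt_zero _ hc
    have : (1 : Matrix (Fin n) (Fin n) ℂ) = Bmat ((⟨0, h⟩ : Fin n), (⟨0, h⟩ : Fin n)) := by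
      rw [hB, hd, Matrix.diagonal_one]
    rw [this]; exact Bmat_mem _

lemma Pm_mem (m : ℕ) (hm : m ≤ n) :
    Matrix.diagonal (fun l : Fin n => if (l : ℕ) < m then (1 : ℂ) else 0) ∈ V n := by
  rcases eq_or_lt_of_le hm with h | h
  · have : (fun l : Fin n => if (l : ℕ) < m then (1 : ℂ) else 0) = fun _ => (1 : ℂ) := by
      funext l; rw [if_pos (by rw [h]; exact l.isLt)]
    rw [this, Matrix.diagonal_one]; exact one_mem_V
  · set k : Fin n := ⟨m, h⟩
    have hB : Bmat (k, k) = Matrix.diagonal (dvec k) := if_pos rfl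
    have key : Matrix.diagonal (fun l : Fin n => if (l : ℕ) < m then (1 : ℂ) else 0)
        = (2⁻¹ : ℝ) • ((1 : Matrix (Fin n) (Fin n) ℂ) - Bmat (k, k)) := by
      rw [hB]
      ext p q
      by_cases hpq : p = q
      · subst hpq
        simp only [Matrix.diagonal_apply_eq, Matrix.smul_apply, Matrix.sub_apply,
          Matrix.one_apply_eq, dvec]
        have hlt : p < k ↔ (p : ℕ) < m := Iff.rfl
        by_cases hc : (p : ℕ) < m
        · rw [if_pos hc, if_pos (hlt.mpr hc)]
          norm_num [Complex.real_smul]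
        · rw [if_neg hc, if_neg (fun hh => hc (hlt.mp hh))]
          norm_num
      · simp [Matrix.diagonal_apply_ne _ hpq, Matrix.one_apply_ne hpq]
    rw [key]
    exact Submodule.smul_mem _ _ (sub_mem one_mem_V (Bmat_mem _))

lemma Ekk_mem (k : Fin n) : Matrix.single k k (1 : ℂ) ∈ V n := by
  have h1 := Pm_mem ((k : ℕ) + 1) k.isLt
  have h2 := Pm_mem (k : ℕ) (le_of_lt k.isLt)
  have key : Matrix.single k k (1 : ℂ)
      = Matrix.diagonal (fun l : Fin n => if (l : ℕ) < (k : ℕ) + 1 then (1 : ℂ) else 0)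
        - Matrix.diagonal (fun l : Fin n => if (l : ℕ) < (k : ℕ) then (1 : ℂ) else 0) := by
    ext p q
    by_cases hpq : p = q
    · subst hpq
      simp only [Matrix.sub_apply, Matrix.diagonal_apply_eq, Matrix.single, Matrix.of_apply]
      by_cases hc : p = k
      · subst hc; simp
      · have hkp : ¬(k = p ∧ k = p) := fun ⟨hh, _⟩ => hc hh.symm
        rw [if_neg hkp]
        have hne : (p : ℕ) ≠ (k : ℕ) := fun hh => hc (Fin.ext hh)
        by_cases h3 : (p : ℕ) < (k : ℕ)
        · rw [if_pos (Nat.lt_succ_of_lt h3), if_pos h3]; ring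
        · rw [if_neg (by omega), if_neg h3]; ring
    · have : ¬(k = p ∧ k = q) := fun ⟨h1, h2⟩ => hpq (h1 ▸ h2 ▸ rfl)
      simp [Matrix.diagonal_apply_ne _ hpq, Matrix.single, this]
  rw [key]
  exact sub_mem h1 h2

lemma offd_mem (i j : Fin n) (hij : i ≠ j) : Matrix.diagonal (offd i j) ∈ V n := by
  have key : Matrix.diagonal (offd i j)
      = (1 : Matrix (Fin n) (Fin n) ℂ) - Matrix.single i i 1 - Matrix.single j j 1 := by
    ext p q
    by_cases hpq : p = q
    · subst hpq
      simp only [Matrix.diagonal_apply_eq, Matrix.sub_apply, Matrix.one_apply_eq, offd,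
        Matrix.single, Matrix.of_apply]
      by_cases hpi : p = i
      · subst hpi
        rw [if_pos (Or.inl rfl), if_pos ⟨rfl, rfl⟩, if_neg (fun ⟨hh, _⟩ => hij hh.symm)]
        ring
      · by_cases hpj : p = j
        · subst hpj
          rw [if_pos (Or.inr rfl), if_neg (fun ⟨hh, _⟩ => hpi hh.symm), if_pos ⟨rfl, rfl⟩]
          ring
        · rw [if_neg (by tauto), if_neg (fun ⟨hh, _⟩ => hpi hh.symm),
            if_neg (fun ⟨hh, _⟩ => hpj hh.symm)]
          ring
    · have h1 : ¬(i = p ∧ i = q) := fun ⟨ha, hb⟩ => hpq (ha ▸ hb ▸ rfl)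
      have h2 : ¬(j = p ∧ j = q) := fun ⟨ha, hb⟩ => hpq (ha ▸ hb ▸ rfl)
      simp [Matrix.diagonal_apply_ne _ hpq, Matrix.one_apply_ne hpq, Matrix.single, h1, h2]
  rw [key]
  exact sub_mem (sub_mem one_mem_V (Ekk_mem i)) (Ekk_mem j)

lemma offd_comm (i j : Fin n) : offd i j = offd j i := by
  funext l; simp only [offd, or_comm]

lemma pair_mem_lt {i j : Fin n} (h : i < j) (c : ℂ) :
    Matrix.single i j c + Matrix.single j i (star c) ∈ V n := by
  have hij : i ≠ j := ne_of_lt h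
  have hM1 : Matrix.single i j (1 : ℂ) + Matrix.single j i (1 : ℂ) ∈ V n := by
    have hB : Bmat (i, j) = Matrix.diagonal (offd i j) + Matrix.single i j (cval i j)
        + Matrix.single j i (star (cval i j)) := if_neg hij
    have hc : cval i j = 1 := if_pos h
    have key : Matrix.single i j (1 : ℂ) + Matrix.single j i (1 : ℂ)
        = Bmat (i, j) - Matrix.diagonal (offd i j) := by
      rw [hB, hc, star_one]; abel
    rw [key]
    exact sub_mem (Bmat_mem _) (offd_mem _ _ hij)
  have hM2 : Matrix.single j i Complex.I + Matrix.single i j (-Complex.I) ∈ V n := by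
    have hB : Bmat (j, i) = Matrix.diagonal (offd j i) + Matrix.single j i (cval j i)
        + Matrix.single i j (star (cval j i)) := if_neg (Ne.symm hij)
    have hc : cval j i = Complex.I := if_neg (not_lt_of_gt h)
    have key : Matrix.single j i Complex.I + Matrix.single i j (-Complex.I)
        = Bmat (j, i) - Matrix.diagonal (offd j i) := by
      rw [hB, hc, Complex.star_def, Complex.conj_I]; abel
    rw [key]
    exact sub_mem (Bmat_mem _) (offd_mem _ _ (Ne.symm hij))
  have key : Matrix.single i j c + Matrix.single j i (star c)
      = c.re • (Matrix.single i j (1 : ℂ) + Matrix.single j i (1 : ℂ))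
        + (-c.im) • (Matrix.single j i Complex.I + Matrix.single i j (-Complex.I)) := by
    have hc1 : Matrix.single i j c
        = c.re • Matrix.single i j (1 : ℂ) + (-c.im) • Matrix.single i j (-Complex.I) := by
      have harg : c.re • (1 : ℂ) + (-c.im) • (-Complex.I) = c := by
        simp only [Complex.real_smul]
        rw [Complex.ext_iff]
        push_cast
        simp
      rw [Matrix.smul_single, Matrix.smul_single, ← Matrix.single_add,
        harg]
    have hc2 : Matrix.single j i (star c)
        = c.re • Matrix.single j i (1 : ℂ) + (-c.im) • Matrix.single j i Complex.I := by
      have harg : c.re • (1 : ℂ) + (-c.im) • Complex.I = star c := by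
        simp only [Complex.real_smul, Complex.star_def]
        rw [Complex.ext_iff]
        push_cast
        simp
      rw [Matrix.smul_single, Matrix.smul_single, ← Matrix.single_add,
        harg]
    rw [hc1, hc2, smul_add, smul_add]
    abel
  rw [key]
  exact add_mem (Submodule.smul_mem _ _ hM1) (Submodule.smul_mem _ _ hM2)

lemma pair_mem (i j : Fin n) (c : ℂ) (hc : i = j → star c = c) :
    Matrix.single i j c + Matrix.single j i (star c) ∈ V n := by
  rcases lt_trichotomy i j with h | h | h
  · exact pair_mem_lt h c
  · subst h
    obtain ⟨r, hr⟩ := Complex.conj_eq_iff_real.mp (hc rfl)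
    have key : Matrix.single i i c + Matrix.single i i (star c)
        = (2 * r) • Matrix.single i i (1 : ℂ) := by
      have harg : (r : ℂ) + (r : ℂ) = (2 * r) • (1 : ℂ) := by
        simp only [Complex.real_smul]
        push_cast
        ring
      rw [hc rfl, ← Matrix.single_add, Matrix.smul_single, hr, harg]
    rw [key]
    exact Submodule.smul_mem _ _ (Ekk_mem i)
  · have := pair_mem_lt h (star c)
    rw [star_star] at this
    rw [add_comm]
    exact this


lemma hermitian_mem (X : Matrix (Fin n) (Fin n) ℂ) (hX : X.IsHermitian) : X ∈ V n := by
  have h1 : ∑ p : Fin n × Fin n, Matrix.single p.1 p.2 (X p.1 p.2) = X := by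
    rw [Fintype.sum_prod_type]
    exact (Matrix.matrix_eq_sum_single X).symm
  have h2 : ∑ p : Fin n × Fin n, Matrix.single p.2 p.1 (star (X p.1 p.2)) = X := by
    have : ∀ p : Fin n × Fin n, Matrix.single p.2 p.1 (star (X p.1 p.2))
        = Matrix.single p.2 p.1 (X p.2 p.1) := by
      intro p; rw [hX.apply]
    rw [Finset.sum_congr rfl (fun p _ => this p)]
    exact (Fintype.sum_equiv (Equiv.prodComm (Fin n) (Fin n))
      (fun p : Fin n × Fin n => Matrix.single p.2 p.1 (X p.2 p.1))
      (fun p : Fin n × Fin n => Matrix.single p.1 p.2 (X p.1 p.2)) (fun p => rfl)).trans h1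
  have hsum : X = ∑ p : Fin n × Fin n, (2⁻¹ : ℝ) •
      (Matrix.single p.1 p.2 (X p.1 p.2) + Matrix.single p.2 p.1 (star (X p.1 p.2))) := by
    rw [← Finset.smul_sum, Finset.sum_add_distrib, h1, h2, smul_add, ← add_smul]
    norm_num
  rw [hsum]
  apply Submodule.sum_mem
  intro p _
  apply Submodule.smul_mem
  apply pair_mem
  intro hp
  calc star (X p.1 p.2) = X p.2 p.1 := hX.apply _ _
    _ = X p.1 p.2 := by rw [hp]

lemma Bmat_apply_ne {i j : Fin n} (hij : i ≠ j) (p : Fin n × Fin n) :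
    Bmat p i j = (if p = (i, j) then cval i j else 0)
      + (if p = (j, i) then star (cval j i) else 0) := by
  obtain ⟨p1, p2⟩ := p
  by_cases hp : p1 = p2
  · subst hp
    have hB : Bmat (p1, p1) = Matrix.diagonal (dvec p1) := if_pos rfl
    rw [hB, Matrix.diagonal_apply_ne _ hij,
      if_neg (show ¬((p1, p1) = (i, j)) by
        rintro hh; rw [Prod.mk.injEq] at hh; exact hij (hh.1.symm.trans hh.2)),
      if_neg (show ¬((p1, p1) = (j, i)) by
        rintro hh; rw [Prod.mk.injEq] at hh; exact hij (hh.1.symm.trans hh.2).symm)]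
    ring
  · have hB : Bmat (p1, p2) = Matrix.diagonal (offd p1 p2) + Matrix.single p1 p2 (cval p1 p2)
        + Matrix.single p2 p1 (star (cval p1 p2)) := if_neg hp
    rw [hB]
    rw [Matrix.add_apply, Matrix.add_apply, Matrix.diagonal_apply_ne _ hij, zero_add]
    congr 1
    · by_cases h1 : (p1, p2) = (i, j)
      · rw [Prod.mk.injEq] at h1; obtain ⟨rfl, rfl⟩ := h1
        simp
      · rw [if_neg h1]
        apply Matrix.single_apply_of_ne
        rintro ⟨rfl, rfl⟩; exact h1 rfl
    · by_cases h1 : (p1, p2) = (j, i)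
      · rw [Prod.mk.injEq] at h1; obtain ⟨rfl, rfl⟩ := h1
        simp
      · rw [if_neg h1]
        apply Matrix.single_apply_of_ne
        rintro ⟨rfl, rfl⟩; exact h1 rfl

lemma Bmat_apply_diag (l : Fin n) (p : Fin n × Fin n) :
    Bmat p l l = if p.1 = p.2 then dvec p.1 l else offd p.1 p.2 l := by
  obtain ⟨p1, p2⟩ := p
  by_cases hp : p1 = p2
  · subst hp
    have hB : Bmat (p1, p1) = Matrix.diagonal (dvec p1) := if_pos rfl
    rw [hB, if_pos rfl, Matrix.diagonal_apply_eq]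
  · have hB : Bmat (p1, p2) = Matrix.diagonal (offd p1 p2) + Matrix.single p1 p2 (cval p1 p2)
        + Matrix.single p2 p1 (star (cval p1 p2)) := if_neg hp
    rw [hB, if_neg hp]
    rw [Matrix.add_apply, Matrix.add_apply, Matrix.diagonal_apply_eq]
    have e1 : Matrix.single p1 p2 (cval p1 p2) l l = 0 := by
      apply Matrix.single_apply_of_ne
      rintro ⟨rfl, rfl⟩; exact hp rfl
    have e2 : Matrix.single p2 p1 (star (cval p1 p2)) l l = 0 := by
      apply Matrix.single_apply_of_ne
      rintro ⟨rfl, rfl⟩; exact hp rfl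
    rw [e1, e2]; ring

lemma Bmat_linearIndependent : LinearIndependent ℝ (Bmat (n := n)) := by
  rw [Fintype.linearIndependent_iff]
  intro h H
  have Hentry : ∀ i j : Fin n, (∑ p : Fin n × Fin n, h p • Bmat p) i j = 0 := by
    intro i j; rw [H]; rfl
  -- off-diagonal coefficients
  have key : ∀ i j : Fin n, i < j → h (i, j) = 0 ∧ h (j, i) = 0 := by
    intro i j hlt
    have hij : i ≠ j := ne_of_lt hlt
    have He := Hentry i j
    rw [Matrix.sum_apply] at He
    have hterm : ∀ p : Fin n × Fin n, (h p • Bmat p) i j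
        = (if p = (i, j) then h p • cval i j else 0)
          + (if p = (j, i) then h p • star (cval j i) else 0) := by
      intro p
      have t1 : h p • (if p = (i, j) then cval i j else 0)
          = (if p = (i, j) then h p • cval i j else 0) := by split_ifs <;> simp
      have t2 : h p • (if p = (j, i) then star (cval j i) else 0)
          = (if p = (j, i) then h p • star (cval j i) else 0) := by split_ifs <;> simp
      rw [Matrix.smul_apply, Bmat_apply_ne hij p, smul_add, t1, t2]
    rw [Finset.sum_congr rfl (fun p _ => hterm p), Finset.sum_add_distrib,
      Finset.sum_ite_eq' Finset.univ, Finset.sum_ite_eq' Finset.univ] at He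
    simp only [Finset.mem_univ, if_pos] at He
    have hc1 : cval i j = 1 := if_pos hlt
    have hc2 : star (cval j i) = -Complex.I := by
      rw [show cval j i = Complex.I from if_neg (not_lt_of_gt hlt), Complex.star_def,
        Complex.conj_I]
    rw [hc1, hc2] at He
    have He' : ((h (i, j) : ℝ) : ℂ) + ((-(h (j, i)) : ℝ) : ℂ) * Complex.I = 0 := by
      rw [← He]
      simp [Complex.real_smul]
    rw [Complex.ext_iff] at He'
    push_cast at He'
    simp at He'
    exact ⟨He'.1, He'.2⟩
  have hoff : ∀ p : Fin n × Fin n, p.1 ≠ p.2 → h p = 0 := by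
    rintro ⟨p1, p2⟩ hp
    rcases lt_or_gt_of_ne hp with hlt | hgt
    · exact (key p1 p2 hlt).1
    · exact (key p2 p1 hgt).2
  -- diagonal coefficients
  have Hd : ∀ l : Fin n, ∑ k : Fin n, (if l < k then -(h (k, k)) else h (k, k)) = 0 := by
    intro l
    have He := Hentry l l
    rw [Matrix.sum_apply] at He
    have hterm : ∀ p : Fin n × Fin n, (h p • Bmat p) l l
        = (if p.1 = p.2 then h p • dvec p.1 l else 0) := by
      intro p
      rw [Matrix.smul_apply, Bmat_apply_diag]
      by_cases hp : p.1 = p.2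
      · rw [if_pos hp, if_pos hp]
      · rw [if_neg hp, if_neg hp, hoff p hp, zero_smul]
    rw [Finset.sum_congr rfl (fun p _ => hterm p)] at He
    rw [Fintype.sum_prod_type] at He
    have hinner : ∀ k : Fin n, (∑ p2 : Fin n, if k = p2 then h (k, p2) • dvec k l else 0)
        = h (k, k) • dvec k l := by
      intro k
      rw [Finset.sum_ite_eq Finset.univ]
      simp
    rw [Finset.sum_congr rfl (fun k _ => hinner k)] at He
    have hre : ∀ k : Fin n, h (k, k) • dvec k l
        = (((if l < k then -(h (k, k)) else h (k, k)) : ℝ) : ℂ) := by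
      intro k
      simp only [dvec]
      split_ifs <;> simp [Complex.real_smul]
    rw [Finset.sum_congr rfl (fun k _ => hre k)] at He
    rw [← Complex.ofReal_sum] at He
    exact_mod_cast He
  intro p
  obtain ⟨p1, p2⟩ := p
  by_cases hp : p1 = p2
  · subst hp
    have hn : 0 < n := p1.pos
    by_cases h0 : (p1 : ℕ) = 0
    · have hA := Hd p1
      have hB := Hd ⟨n - 1, by omega⟩
      have hAB : ∑ k : Fin n, ((if p1 < k then -(h (k, k)) else h (k, k))
          + (if (⟨n - 1, by omega⟩ : Fin n) < k then -(h (k, k)) else h (k, k)))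
          = 0 := by
        rw [Finset.sum_add_distrib, hA, hB]; ring
      have hconv : ∀ k : Fin n, ((if p1 < k then -(h (k, k)) else h (k, k))
          + (if (⟨n - 1, by omega⟩ : Fin n) < k then -(h (k, k)) else h (k, k)))
          = (if k = p1 then 2 * h (k, k) else 0) := by
        intro k
        have hk := k.isLt
        rw [if_neg (show ¬((⟨n - 1, by omega⟩ : Fin n) < k) by simp only [Fin.lt_def, Fin.val_mk]; omega)]
        by_cases hk0 : k = p1
        · subst hk0
          rw [if_neg (lt_irrefl k), if_pos rfl]
          ring
        · have hkne : (k : ℕ) ≠ (p1 : ℕ) := fun hh => hk0 (Fin.ext hh)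
          rw [if_pos (show p1 < k by simp only [Fin.lt_def, Fin.val_mk]; omega), if_neg hk0]
          ring
      rw [Finset.sum_congr rfl (fun k _ => hconv k), Finset.sum_ite_eq' Finset.univ,
        if_pos (Finset.mem_univ _)] at hAB
      linarith
    · set m := (p1 : ℕ) - 1 with hm
      have hp1 : (p1 : ℕ) = m + 1 := by omega
      have hA := Hd p1
      have hB := Hd ⟨m, by omega⟩
      have hAB : ∑ k : Fin n, ((if p1 < k then -(h (k, k)) else h (k, k))
          - (if (⟨m, by omega⟩ : Fin n) < k then -(h (k, k)) else h (k, k)))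
          = 0 := by
        rw [Finset.sum_sub_distrib, hA, hB]; ring
      have hconv : ∀ k : Fin n, ((if p1 < k then -(h (k, k)) else h (k, k))
          - (if (⟨m, by omega⟩ : Fin n) < k then -(h (k, k)) else h (k, k)))
          = (if k = p1 then 2 * h (k, k) else 0) := by
        intro k
        by_cases hk0 : k = p1
        · subst hk0
          rw [if_neg (lt_irrefl k), if_pos (show (⟨m, by omega⟩ : Fin n) < k by
              simp only [Fin.lt_def, Fin.val_mk]; omega), if_pos rfl]
          ring
        · have hkne : (k : ℕ) ≠ (p1 : ℕ) := fun hh => hk0 (Fin.ext hh)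
          rcases lt_or_gt_of_ne hkne with hlt | hgt
          · rw [if_neg (show ¬(p1 < k) by simp only [Fin.lt_def, Fin.val_mk]; omega),
              if_neg (show ¬((⟨m, by omega⟩ : Fin n) < k) by simp only [Fin.lt_def, Fin.val_mk]; omega),
              if_neg hk0]
            ring
          · rw [if_pos (show p1 < k by simp only [Fin.lt_def, Fin.val_mk]; omega),
              if_pos (show (⟨m, by omega⟩ : Fin n) < k by simp only [Fin.lt_def, Fin.val_mk]; omega),
              if_neg hk0]
            ring
      rw [Finset.sum_congr rfl (fun k _ => hconv k), Finset.sum_ite_eq' Finset.univ,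
        if_pos (Finset.mem_univ _)] at hAB
      linarith
  · exact hoff (p1, p2) hp

end LTaux


/-- The real vector space of Hermitian `n × n` complex matrices admits a basis consisting
entirely of light-touch observables: there are `n²` light-touch observables which are
linearly independent over `ℝ` and whose real span contains every Hermitian matrix. -/
theorem lightTouch_basis (n : ℕ) :
    ∃ b : Fin (n ^ 2) → Matrix (Fin n) (Fin n) ℂ,
      (∀ k, LightTouch (b k)) ∧
      LinearIndependent ℝ b ∧
      ∀ X : Matrix (Fin n) (Fin n) ℂ, X.IsHermitian → X ∈ Submodule.span ℝ (Set.range b) := by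
  let e : Fin (n ^ 2) ≃ Fin n × Fin n := (finCongr (pow_two n)).trans finProdFinEquiv.symm
  refine ⟨LTaux.Bmat ∘ e, ?_, ?_, ?_⟩
  · intro k
    obtain ⟨hH, hsq⟩ := LTaux.lightTouch_Bmat (e k)
    exact ⟨hH, 1, by rw [Function.comp_apply, hsq]; norm_num⟩
  · exact (LTaux.Bmat_linearIndependent).comp e e.injective
  · intro X hX
    have hr : Set.range (LTaux.Bmat ∘ e) = Set.range (LTaux.Bmat (n := n)) := by
      rw [Set.range_comp, Equiv.range_eq_univ, Set.image_univ]
    rw [hr]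
    exact LTaux.hermitian_mem X hX
end
end

section
/- Let γ ∈ (0,1), r₃ ∈ (-1,1), s₃ = r₃ + γ(1-r₃). The 4×4 Choi matrix with rows ((1+r₃)/(1+s₃), 0, 0, √(1-γ)), (0, γ(1-r₃)/(1+s₃), 0, 0), (0,0,0,0), (√(1-γ), 0, 0, 1) is positive semidefinite if and only if r₃ ≥ γ/(γ-2). -/
open Matrix
open scoped ComplexOrder

noncomputable section

/-- The Choi matrix of the candidate Bayesian inverse of the amplitude-damping channel
is positive semidefinite if and only if `r₃ ≥ γ/(γ-2)`. -/
theorem choi_posSemidef_iff (γ r3 : ℝ) (hγ0 : 0 < γ) (hγ1 : γ < 1)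
    (hr0 : -1 < r3) (hr1 : r3 < 1) :
    letI s3 : ℝ := r3 + γ * (1 - r3)
    Matrix.PosSemidef
      (!![(((1 + r3) / (1 + s3) : ℝ) : ℂ), 0, 0, (Real.sqrt (1 - γ) : ℂ);
          0, ((γ * (1 - r3) / (1 + s3) : ℝ) : ℂ), 0, 0;
          0, 0, 0, 0;
          (Real.sqrt (1 - γ) : ℂ), 0, 0, 1])
      ↔ r3 ≥ γ / (γ - 2) := by
  set s3 : ℝ := r3 + γ * (1 - r3) with hs
  have hs3 : (0:ℝ) < 1 + s3 := by simp only [hs]; nlinarith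
  have hγ' : (0:ℝ) ≤ 1 - γ := by linarith
  have hc2 : Real.sqrt (1 - γ) ^ 2 = 1 - γ := Real.sq_sqrt hγ'
  set a : ℝ := (1 + r3) / (1 + s3) with ha
  set b : ℝ := γ * (1 - r3) / (1 + s3) with hb
  set c : ℝ := Real.sqrt (1 - γ) with hc
  constructor
  · intro h
    have key := (posSemidef_iff_dotProduct_mulVec.mp h).2 ![1, 0, 0, (-(c:ℝ) : ℂ)]
    have hval : star (![1, 0, 0, (-(c:ℝ) : ℂ)]) ⬝ᵥ
        (!![((a:ℝ):ℂ), 0, 0, ((c:ℝ):ℂ); 0, ((b:ℝ):ℂ), 0, 0; 0, 0, 0, 0;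
            ((c:ℝ):ℂ), 0, 0, 1] *ᵥ ![1, 0, 0, (-(c:ℝ) : ℂ)]) = ((a - c^2 : ℝ) : ℂ) := by
      simp [Matrix.mulVec, dotProduct, Fin.sum_univ_four]
      ring
    rw [hval] at key
    rw [Complex.zero_le_real] at key
    rw [hc2] at key
    rw [ha, div_sub' (ne_of_gt hs3)] at key
    have key2 : (0:ℝ) ≤ 1 + r3 - (1 - γ) * (1 + s3) := by
      have := (div_nonneg_iff.mp key)
      rcases this with ⟨h1, _⟩ | ⟨_, h2⟩
      · linarith
      · linarith
    rw [ge_iff_le, div_le_iff_of_neg (by linarith : γ - 2 < 0)]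
    simp only [hs] at key2
    nlinarith
  · intro h
    have hdet : (0:ℝ) ≤ a - c^2 := by
      rw [hc2, ha, sub_nonneg, le_div_iff₀ hs3]
      rw [ge_iff_le, div_le_iff_of_neg (by linarith : γ - 2 < 0)] at h
      simp only [hs]
      nlinarith
    have hbnn : (0:ℝ) ≤ b := by
      rw [hb]
      apply div_nonneg (by nlinarith) (by linarith)
    set p : ℝ := Real.sqrt (a - c^2) with hp
    set q : ℝ := Real.sqrt b with hq
    have hp2 : p^2 = a - c^2 := Real.sq_sqrt hdet
    have hq2 : q^2 = b := Real.sq_sqrt hbnn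
    have hM : (!![((a:ℝ):ℂ), 0, 0, ((c:ℝ):ℂ); 0, ((b:ℝ):ℂ), 0, 0; 0, 0, 0, 0;
            ((c:ℝ):ℂ), 0, 0, 1])
        = (!![((p:ℝ):ℂ), 0, 0, 0; 0, ((q:ℝ):ℂ), 0, 0; ((c:ℝ):ℂ), 0, 0, 1] :
            Matrix (Fin 3) (Fin 4) ℂ)ᴴ *
          (!![((p:ℝ):ℂ), 0, 0, 0; 0, ((q:ℝ):ℂ), 0, 0; ((c:ℝ):ℂ), 0, 0, 1]) := by
      ext i j
      fin_cases i <;> fin_cases j <;>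
        simp [Matrix.mul_apply, Fin.sum_univ_three, Matrix.conjTranspose_apply,
          Matrix.vecHead, Matrix.vecTail] <;>
        norm_cast <;> nlinarith [hp2, hq2]
    rw [hM]
    exact Matrix.posSemidef_conjTranspose_mul_self _
end
end

section
/- With γ ∈ (0,1), r₃ ∈ (-1,1) with r₃ ≥ γ/(γ-2), and s₃ = r₃ + γ(1-r₃), the three Kraus operators F₀ = diag(√((1+r₃)/(1+s₃)), √((1-γ)(1+s₃)/(1+r₃))), F₁ = [[0,0],[√(γ(1-r₃)/(1+s₃)), 0]], F₂ = diag(0, √(γ(r₃+s₃)/(1+r₃))) satisfy F₀†F₀ + F₁†F₁ + F₂†F₂ = 1₂. -/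
open Matrix

noncomputable section

/-- The Kraus operators of the Bayesian inverse of the amplitude-damping channel
satisfy the trace-preservation condition `F₀†F₀ + F₁†F₁ + F₂†F₂ = 1`. -/
theorem bayes_inverse_kraus_sum (γ r3 : ℝ) (hγ0 : 0 < γ) (hγ1 : γ < 1)
    (hr0 : -1 < r3) (hr1 : r3 < 1) (hge : r3 ≥ γ / (γ - 2)) :
    letI s3 : ℝ := r3 + γ * (1 - r3)
    letI F0 : Matrix (Fin 2) (Fin 2) ℝ :=
      !![Real.sqrt ((1 + r3) / (1 + s3)), 0; 0, Real.sqrt ((1 - γ) * (1 + s3) / (1 + r3))]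
    letI F1 : Matrix (Fin 2) (Fin 2) ℝ :=
      !![0, 0; Real.sqrt (γ * (1 - r3) / (1 + s3)), 0]
    letI F2 : Matrix (Fin 2) (Fin 2) ℝ :=
      !![0, 0; 0, Real.sqrt (γ * (r3 + s3) / (1 + r3))]
    F0ᵀ * F0 + F1ᵀ * F1 + F2ᵀ * F2 = 1 := by
  set s3 : ℝ := r3 + γ * (1 - r3) with hs
  have hs3 : (0:ℝ) < 1 + s3 := by
    have : 0 < γ * (1 - r3) := mul_pos hγ0 (by linarith)
    linarith
  have hr3 : (0:ℝ) < 1 + r3 := by linarith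
  have hrs : (0:ℝ) ≤ r3 + s3 := by
    have h2 : γ - 2 < 0 := by linarith
    have := (div_le_iff_of_neg h2).mp hge
    nlinarith
  have h1 : (0:ℝ) ≤ (1 + r3) / (1 + s3) := by positivity
  have h2 : (0:ℝ) ≤ (1 - γ) * (1 + s3) / (1 + r3) := by
    have : (0:ℝ) ≤ 1 - γ := by linarith
    positivity
  have h3 : (0:ℝ) ≤ γ * (1 - r3) / (1 + s3) := by
    have : (0:ℝ) ≤ 1 - r3 := by linarith
    positivity
  have h4 : (0:ℝ) ≤ γ * (r3 + s3) / (1 + r3) := by positivity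
  have ht : ∀ a b c d : ℝ, (!![a,b;c,d])ᵀ = !![a,c;b,d] := fun a b c d =>
    (Matrix.transposeᵣ_eq _).symm
  ext i j
  fin_cases i <;> fin_cases j <;>
    simp [ht, Matrix.mul_apply, Fin.sum_univ_two, Matrix.one_apply,
      Real.mul_self_sqrt, h1, h2, h3, h4] <;>
  · field_simp
    simp only [hs]
    ring
end
end

section
/- Let γ ∈ (0,1), r₃ ∈ (-1,1) with r₃ + s₃ ≥ 0 where s₃ = r₃ + γ(1-r₃). Let E be the amplitude-damping channel with parameter γ, ρ = diag((1+r₃)/2, (1-r₃)/2), and F the channel with Kraus operators F₀, F₁, F₂ as above. Then E ⋆ ρ = S(F ⋆ E(ρ)), i.e., F is a Bayesian inverse of (E, ρ). -/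
open Matrix
open scoped Kronecker

noncomputable section

/-- Pauli matrix σ₁. -/
def pauli1 : Matrix (Fin 2) (Fin 2) ℂ := !![0, 1; 1, 0]
/-- Pauli matrix σ₂. -/
def pauli2 : Matrix (Fin 2) (Fin 2) ℂ := !![0, -Complex.I; Complex.I, 0]
/-- Pauli matrix σ₃. -/
def pauli3 : Matrix (Fin 2) (Fin 2) ℂ := !![1, 0; 0, -1]

/-- First Kraus operator of the amplitude-damping channel. -/
def AD0 (γ : ℝ) : Matrix (Fin 2) (Fin 2) ℂ := !![1, 0; 0, (Real.sqrt (1 - γ) : ℂ)]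
/-- Second Kraus operator of the amplitude-damping channel. -/
def AD1 (γ : ℝ) : Matrix (Fin 2) (Fin 2) ℂ := !![0, (Real.sqrt γ : ℂ); 0, 0]
/-- The amplitude-damping channel with damping parameter γ. -/
def AD (γ : ℝ) (X : Matrix (Fin 2) (Fin 2) ℂ) : Matrix (Fin 2) (Fin 2) ℂ :=
  AD0 γ * X * (AD0 γ)ᴴ + AD1 γ * X * (AD1 γ)ᴴ


lemma Jam_apply {n m : ℕ} (E : Matrix (Fin n) (Fin n) ℂ → Matrix (Fin m) (Fin m) ℂ)
    (a b : Fin n) (k l : Fin m) :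
    Jam E (a,k) (b,l) = E (Matrix.single b a 1) k l := by
  simp [Jam, Matrix.sum_apply, Matrix.single, Matrix.of_apply, Finset.sum_ite_eq,
    ite_and]

lemma sot_apply {n m : ℕ} (E : Matrix (Fin n) (Fin n) ℂ → Matrix (Fin m) (Fin m) ℂ)
    (ρ : Matrix (Fin n) (Fin n) ℂ) (i j : Fin n) (k l : Fin m) :
    sot E ρ (i,k) (j,l) = (1/2 : ℂ) *
      ((∑ a, ρ i a * E (Matrix.single j a 1) k l)
        + ∑ a, E (Matrix.single a i 1) k l * ρ a j) := by
  simp [sot, Matrix.mul_apply, Fintype.sum_prod_type, Matrix.one_apply, Jam_apply,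
    Finset.sum_ite_eq, Finset.sum_ite_eq', mul_ite, ite_mul]

set_option maxHeartbeats 1000000 in
/-- The channel `F` with the three given Kraus operators is a Bayesian inverse of the
amplitude-damping process `(E, ρ)`: `E ⋆ ρ = S(F ⋆ E(ρ))`. -/
theorem bayes_inverse_amplitude_damping (γ r3 : ℝ) (hγ0 : 0 < γ) (hγ1 : γ < 1)
    (hr0 : -1 < r3) (hr1 : r3 < 1)
    (hsum : r3 + (r3 + γ * (1 - r3)) ≥ 0) :
    letI s3 : ℝ := r3 + γ * (1 - r3)
    letI ρ : Matrix (Fin 2) (Fin 2) ℂ :=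
      !![(((1 + r3) / 2 : ℝ) : ℂ), 0; 0, (((1 - r3) / 2 : ℝ) : ℂ)]
    letI F0 : Matrix (Fin 2) (Fin 2) ℂ :=
      !![(Real.sqrt ((1 + r3) / (1 + s3)) : ℂ), 0;
         0, (Real.sqrt ((1 - γ) * (1 + s3) / (1 + r3)) : ℂ)]
    letI F1 : Matrix (Fin 2) (Fin 2) ℂ :=
      !![0, 0; (Real.sqrt (γ * (1 - r3) / (1 + s3)) : ℂ), 0]
    letI F2 : Matrix (Fin 2) (Fin 2) ℂ :=
      !![0, 0; 0, (Real.sqrt (γ * (r3 + s3) / (1 + r3)) : ℂ)]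
    letI F : Matrix (Fin 2) (Fin 2) ℂ → Matrix (Fin 2) (Fin 2) ℂ :=
      fun X => F0 * X * F0ᴴ + F1 * X * F1ᴴ + F2 * X * F2ᴴ
    sot (AD γ) ρ = swapM (sot F (AD γ ρ)) := by
  have hγ0' : (0:ℝ) ≤ γ := le_of_lt hγ0
  have h1γ : (0:ℝ) ≤ 1 - γ := by linarith
  have h1r : (0:ℝ) < 1 + r3 := by linarith
  have h1s : (0:ℝ) < 1 + (r3 + γ * (1 - r3)) := by nlinarith
  have sqγ : ((Real.sqrt γ : ℝ) : ℂ) * ((Real.sqrt γ : ℝ) : ℂ) = (γ : ℂ) := by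
    rw [← Complex.ofReal_mul, Real.mul_self_sqrt hγ0']
  have sq1γ : ((Real.sqrt (1-γ) : ℝ) : ℂ) * ((Real.sqrt (1-γ) : ℝ) : ℂ) = ((1-γ : ℝ) : ℂ) := by
    rw [← Complex.ofReal_mul, Real.mul_self_sqrt h1γ]
  have hADX : ∀ X : Matrix (Fin 2) (Fin 2) ℂ, AD γ X =
      !![X 0 0 + ((γ:ℝ):ℂ) * X 1 1, ((Real.sqrt (1-γ):ℝ):ℂ) * X 0 1;
         ((Real.sqrt (1-γ):ℝ):ℂ) * X 1 0, ((1-γ:ℝ):ℂ) * X 1 1] := by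
    intro X
    ext i j
    fin_cases i <;> fin_cases j <;>
      simp [AD, AD0, AD1, Matrix.mul_apply, Fin.sum_univ_two, Complex.conj_ofReal,
        Matrix.vecMul, dotProduct, Matrix.conjTranspose_apply] <;>
      ring_nf <;>
      simp [pow_two, sqγ, sq1γ, mul_comm, mul_left_comm] <;> ring
  have h1r' : (1 + r3 : ℝ) ≠ 0 := ne_of_gt h1r
  have h1s' : (1 + (r3 + γ * (1 - r3)) : ℝ) ≠ 0 := ne_of_gt h1s
  have haa : ((Real.sqrt ((1 + r3) / (1 + (r3 + γ * (1 - r3)))) : ℝ) : ℂ) *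
      ((Real.sqrt ((1 + r3) / (1 + (r3 + γ * (1 - r3)))) : ℝ) : ℂ)
      = (((1 + r3) / (1 + (r3 + γ * (1 - r3))) : ℝ) : ℂ) := by
    rw [← Complex.ofReal_mul, Real.mul_self_sqrt (by positivity)]
  have hcc : ((Real.sqrt (γ * (1 - r3) / (1 + (r3 + γ * (1 - r3)))) : ℝ) : ℂ) *
      ((Real.sqrt (γ * (1 - r3) / (1 + (r3 + γ * (1 - r3)))) : ℝ) : ℂ)
      = ((γ * (1 - r3) / (1 + (r3 + γ * (1 - r3))) : ℝ) : ℂ) := by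
    rw [← Complex.ofReal_mul,
      Real.mul_self_sqrt (div_nonneg (mul_nonneg hγ0' (by linarith)) h1s.le)]
  have hab : ((Real.sqrt ((1 + r3) / (1 + (r3 + γ * (1 - r3)))) : ℝ) : ℂ) *
      ((Real.sqrt ((1 - γ) * (1 + (r3 + γ * (1 - r3))) / (1 + r3)) : ℝ) : ℂ)
      = ((Real.sqrt (1 - γ) : ℝ) : ℂ) := by
    rw [← Complex.ofReal_mul, ← Real.sqrt_mul (by positivity)]
    congr 2
    field_simp
  have hbbdd : ((Real.sqrt ((1 - γ) * (1 + (r3 + γ * (1 - r3))) / (1 + r3)) : ℝ) : ℂ) *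
      ((Real.sqrt ((1 - γ) * (1 + (r3 + γ * (1 - r3))) / (1 + r3)) : ℝ) : ℂ)
      + ((Real.sqrt (γ * (r3 + (r3 + γ * (1 - r3))) / (1 + r3)) : ℝ) : ℂ) *
      ((Real.sqrt (γ * (r3 + (r3 + γ * (1 - r3))) / (1 + r3)) : ℝ) : ℂ) = 1 := by
    rw [← Complex.ofReal_mul, ← Complex.ofReal_mul,
      Real.mul_self_sqrt (div_nonneg (mul_nonneg h1γ h1s.le) h1r.le),
      Real.mul_self_sqrt (div_nonneg (mul_nonneg hγ0' hsum) h1r.le), ← Complex.ofReal_add]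
    norm_cast
    field_simp
    ring
  have hFX : ∀ X : Matrix (Fin 2) (Fin 2) ℂ,
      !![((Real.sqrt ((1 + r3) / (1 + (r3 + γ * (1 - r3)))) : ℝ) : ℂ), 0;
         0, ((Real.sqrt ((1 - γ) * (1 + (r3 + γ * (1 - r3))) / (1 + r3)) : ℝ) : ℂ)] * X *
        !![((Real.sqrt ((1 + r3) / (1 + (r3 + γ * (1 - r3)))) : ℝ) : ℂ), 0;
           0, ((Real.sqrt ((1 - γ) * (1 + (r3 + γ * (1 - r3))) / (1 + r3)) : ℝ) : ℂ)]ᴴ +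
      !![0, 0; ((Real.sqrt (γ * (1 - r3) / (1 + (r3 + γ * (1 - r3)))) : ℝ) : ℂ), 0] * X *
        !![0, 0; ((Real.sqrt (γ * (1 - r3) / (1 + (r3 + γ * (1 - r3)))) : ℝ) : ℂ), 0]ᴴ +
      !![0, 0; 0, ((Real.sqrt (γ * (r3 + (r3 + γ * (1 - r3))) / (1 + r3)) : ℝ) : ℂ)] * X *
        !![0, 0; 0, ((Real.sqrt (γ * (r3 + (r3 + γ * (1 - r3))) / (1 + r3)) : ℝ) : ℂ)]ᴴ
      = !![(((1 + r3) / (1 + (r3 + γ * (1 - r3))) : ℝ) : ℂ) * X 0 0,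
           ((Real.sqrt (1 - γ) : ℝ) : ℂ) * X 0 1;
           ((Real.sqrt (1 - γ) : ℝ) : ℂ) * X 1 0,
           ((γ * (1 - r3) / (1 + (r3 + γ * (1 - r3))) : ℝ) : ℂ) * X 0 0 + X 1 1] := by
    intro X
    ext i j
    fin_cases i <;> fin_cases j <;>
      simp [Matrix.mul_apply, Fin.sum_univ_two, Complex.conj_ofReal,
        Matrix.vecMul, dotProduct, Matrix.conjTranspose_apply]
    · rw [show ∀ u v : ℂ, u * (X 0 0 * v) = u * v * X 0 0 from by intros; ring, haa]
      push_cast; ring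
    · rw [show ∀ u v : ℂ, u * (X 0 1 * v) = u * v * X 0 1 from by intros; ring, hab]
    · rw [show ∀ u v : ℂ, u * (X 1 0 * v) = u * v * X 1 0 from by intros; ring,
        mul_comm ((Real.sqrt ((1 - γ) * (1 + (r3 + γ * (1 - r3))) / (1 + r3)) : ℝ) : ℂ), hab]
    · rw [show ∀ u v w : ℂ, u * (X 1 1 * u) + v * (X 0 0 * v) + w * (X 1 1 * w)
          = v * v * X 0 0 + (u * u + w * w) * X 1 1 from by intros; ring, hcc, hbbdd]
      push_cast; ring
  have h1sC : ((1:ℂ) + ((r3:ℂ) + (γ:ℂ) * (1 - (r3:ℂ)))) ≠ 0 := by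
    have := h1s'
    exact_mod_cast Complex.ofReal_ne_zero.mpr this
  have h1rC : ((1:ℂ) + (r3:ℂ)) ≠ 0 := by
    exact_mod_cast Complex.ofReal_ne_zero.mpr h1r'
  ext ⟨i,k⟩ ⟨j,l⟩
  rw [swapM, Matrix.submatrix_apply]
  have es : ∀ a b i j : Fin 2, Matrix.single a b (1:ℂ) i j
      = if a = i ∧ b = j then 1 else 0 := by
    intro a b i j; simp [Matrix.single, Matrix.of_apply]
  fin_cases i <;> fin_cases k <;> fin_cases j <;> fin_cases l
  all_goals (
    simp only [sot_apply, Fin.sum_univ_two]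
    simp only [hADX, hFX]
    simp only [es, Matrix.cons_val', Matrix.cons_val_zero,
      Matrix.cons_val_one, Matrix.head_cons, Matrix.empty_val', Matrix.cons_val_fin_one,
      Matrix.head_fin_const, Matrix.of_apply]
    norm_num
    try ring
    try (have h1sC' : (1:ℂ) + r3 - r3 * γ + γ ≠ 0 := by convert h1sC using 1; ring
         field_simp; ring)
    try (field_simp; ring))
end
end

section
/- For γ ∈ (0,1) and r₃ ∈ (-1,1), let s₃ = r₃ + γ(1-r₃). Whenever (1+r₃)/(1+s₃) ≠ 1-γ, i.e. unless (1+r₃) = (1-γ)(1+s₃), the Petz recovery map R of the amplitude-damping process (E, ρ) is not a Bayesian inverse: S(R ⋆ E(ρ)) ≠ E ⋆ ρ. In particular Tr[(R ⋆ E(ρ))(σ₁ ⊗ σ₁)] = √((1+r₃)/(1+s₃)) while Tr[(E ⋆ ρ)(σ₁ ⊗ σ₁)] = √(1-γ), and these differ. -/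
open Matrix
open scoped Kronecker

noncomputable section

set_option maxHeartbeats 4000000

lemma swap_trace_pauli (X : Matrix (Fin 2 × Fin 2) (Fin 2 × Fin 2) ℂ) :
    (swapM X * (pauli1 ⊗ₖ pauli1)).trace = (X * (pauli1 ⊗ₖ pauli1)).trace := by
  simp only [swapM, Matrix.trace, Matrix.diag, Fintype.sum_prod_type, Fin.sum_univ_two,
    Matrix.mul_apply, pauli1, Matrix.kroneckerMap_apply, Matrix.submatrix_apply,
    Matrix.of_apply, Matrix.cons_val', Matrix.cons_val_zero, Matrix.cons_val_one,
    Matrix.head_cons, Matrix.empty_val', Matrix.cons_val_fin_one]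
  ring

/-- Whenever `(1+r₃) ≠ (1-γ)(1+s₃)`, the Petz recovery map `R` of the amplitude-damping
process `(E, ρ)` is not a Bayesian inverse: `S(R ⋆ E(ρ)) ≠ E ⋆ ρ`.  In particular,
`Tr[(R ⋆ E(ρ))(σ₁ ⊗ σ₁)] = √((1+r₃)/(1+s₃))` while `Tr[(E ⋆ ρ)(σ₁ ⊗ σ₁)] = √(1-γ)`. -/
theorem petz_not_bayes_inverse (γ r3 : ℝ) (hγ0 : 0 < γ) (hγ1 : γ < 1)
    (hr0 : -1 < r3) (hr1 : r3 < 1)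
    (hne : (1 + r3) ≠ (1 - γ) * (1 + (r3 + γ * (1 - r3)))) :
    letI s3 : ℝ := r3 + γ * (1 - r3)
    letI ρ : Matrix (Fin 2) (Fin 2) ℂ :=
      !![(((1 + r3) / 2 : ℝ) : ℂ), 0; 0, (((1 - r3) / 2 : ℝ) : ℂ)]
    letI R0 : Matrix (Fin 2) (Fin 2) ℂ :=
      !![(Real.sqrt ((1 + r3) / (1 + s3)) : ℂ), 0; 0, 1]
    letI R1 : Matrix (Fin 2) (Fin 2) ℂ :=
      !![0, 0; (Real.sqrt (γ * (1 - r3) / (1 + s3)) : ℂ), 0]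
    letI R : Matrix (Fin 2) (Fin 2) ℂ → Matrix (Fin 2) (Fin 2) ℂ :=
      fun X => R0 * X * R0ᴴ + R1 * X * R1ᴴ
    swapM (sot R (AD γ ρ)) ≠ sot (AD γ) ρ ∧
    (sot R (AD γ ρ) * (pauli1 ⊗ₖ pauli1)).trace = (Real.sqrt ((1 + r3) / (1 + s3)) : ℂ) ∧
    (sot (AD γ) ρ * (pauli1 ⊗ₖ pauli1)).trace = (Real.sqrt (1 - γ) : ℂ) := by
  have hs3 : (0:ℝ) < 1 + (r3 + γ * (1 - r3)) := by nlinarith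
  have h1γ : (0:ℝ) ≤ 1 - γ := by linarith
  have key1 :
      letI s3 : ℝ := r3 + γ * (1 - r3)
      letI ρ : Matrix (Fin 2) (Fin 2) ℂ :=
        !![(((1 + r3) / 2 : ℝ) : ℂ), 0; 0, (((1 - r3) / 2 : ℝ) : ℂ)]
      letI R0 : Matrix (Fin 2) (Fin 2) ℂ :=
        !![(Real.sqrt ((1 + r3) / (1 + s3)) : ℂ), 0; 0, 1]
      letI R1 : Matrix (Fin 2) (Fin 2) ℂ :=
        !![0, 0; (Real.sqrt (γ * (1 - r3) / (1 + s3)) : ℂ), 0]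
      letI R : Matrix (Fin 2) (Fin 2) ℂ → Matrix (Fin 2) (Fin 2) ℂ :=
        fun X => R0 * X * R0ᴴ + R1 * X * R1ᴴ
      (sot R (AD γ ρ) * (pauli1 ⊗ₖ pauli1)).trace
        = (Real.sqrt ((1 + r3) / (1 + (r3 + γ * (1 - r3)))) : ℂ) := by
    show _
    simp only [sot, Jam, AD, AD0, AD1, pauli1, Matrix.trace, Matrix.diag,
      Fintype.sum_prod_type, Fin.sum_univ_two, Matrix.mul_apply, Matrix.add_apply,
      Matrix.smul_apply, Matrix.kroneckerMap_apply, Matrix.sum_apply,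
      Matrix.one_apply, Matrix.conjTranspose_apply, Matrix.single,
      Matrix.of_apply, Matrix.cons_val', Matrix.cons_val_zero, Matrix.cons_val_one,
      Matrix.head_cons, Matrix.head_fin_const, Matrix.empty_val',
      Matrix.cons_val_fin_one]
    norm_num [Complex.ext_iff]
    ring_nf
    rw [Real.sq_sqrt hγ0.le, Real.sq_sqrt h1γ]
    ring
  have key2 :
      letI ρ : Matrix (Fin 2) (Fin 2) ℂ :=
        !![(((1 + r3) / 2 : ℝ) : ℂ), 0; 0, (((1 - r3) / 2 : ℝ) : ℂ)]
      (sot (AD γ) ρ * (pauli1 ⊗ₖ pauli1)).trace = (Real.sqrt (1 - γ) : ℂ) := by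
    show _
    simp only [sot, Jam, AD, AD0, AD1, pauli1, Matrix.trace, Matrix.diag,
      Fintype.sum_prod_type, Fin.sum_univ_two, Matrix.mul_apply, Matrix.add_apply,
      Matrix.smul_apply, Matrix.kroneckerMap_apply, Matrix.sum_apply,
      Matrix.one_apply, Matrix.conjTranspose_apply, Matrix.single,
      Matrix.of_apply, Matrix.cons_val', Matrix.cons_val_zero, Matrix.cons_val_one,
      Matrix.head_cons, Matrix.head_fin_const, Matrix.empty_val',
      Matrix.cons_val_fin_one]
    norm_num [Complex.ext_iff]
    ring
  refine ⟨?_, key1, key2⟩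
  intro h
  have ht := congrArg (fun X => (X * (pauli1 ⊗ₖ pauli1)).trace) h
  rw [swap_trace_pauli, key1, key2] at ht
  have ha : Real.sqrt ((1 + r3) / (1 + (r3 + γ * (1 - r3)))) = Real.sqrt (1 - γ) := by
    exact_mod_cast ht
  have heq := (Real.sqrt_inj (div_nonneg (by linarith) hs3.le) h1γ).mp ha
  rw [div_eq_iff hs3.ne'] at heq
  exact hne heq
end
end

section
/- For the unitary channel E = Ad_U on M_n(ℂ) with any density matrix ρ, the channel F = Ad_{U†} satisfies the Bayes condition E ⋆ ρ = S(F ⋆ E(ρ)). -/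
open Matrix
open scoped Kronecker

noncomputable section

open scoped ComplexOrder

lemma jamE_apply {n : ℕ} (U : Matrix (Fin n) (Fin n) ℂ) (p q : Fin n × Fin n) :
    Jam (fun X => U * X * Uᴴ) p q = U p.2 q.1 * star (U q.2 p.1) := by
  simp only [Jam, Matrix.sum_apply, Matrix.mul_apply, single, conjTranspose_apply,
    kroneckerMap_apply, of_apply, Finset.mul_sum, Finset.sum_mul, mul_ite, ite_mul,
    mul_one, one_mul, mul_zero, zero_mul, ite_and]
  simp [Finset.sum_ite_eq, Finset.sum_ite_eq']

lemma jamF_apply {n : ℕ} (U : Matrix (Fin n) (Fin n) ℂ) (p q : Fin n × Fin n) :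
    Jam (fun X => Uᴴ * X * U) p q = star (U q.1 p.2) * U p.1 q.2 := by
  simp only [Jam, Matrix.sum_apply, Matrix.mul_apply, single, conjTranspose_apply,
    kroneckerMap_apply, of_apply, Finset.mul_sum, Finset.sum_mul, mul_ite, ite_mul,
    mul_one, one_mul, mul_zero, zero_mul, ite_and]
  simp [Finset.sum_ite_eq, Finset.sum_ite_eq']

lemma sotE_apply {n : ℕ} (U ρ : Matrix (Fin n) (Fin n) ℂ) (p q : Fin n × Fin n) :
    sot (fun X => U * X * Uᴴ) ρ p q
      = (1 / 2 : ℂ) * (U p.2 q.1 * (ρ * Uᴴ) p.1 q.2 + star (U q.2 p.1) * (U * ρ) p.2 q.1) := by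
  simp only [sot, Matrix.smul_apply, Matrix.add_apply, Matrix.mul_apply, smul_eq_mul,
    jamE_apply, kroneckerMap_apply, one_apply, Fintype.sum_prod_type, mul_ite, ite_mul,
    mul_one, one_mul, mul_zero, zero_mul, Finset.sum_ite_eq, Finset.sum_ite_eq',
    Finset.mul_sum, conjTranspose_apply]
  simp only [Finset.sum_ite_irrel, Finset.sum_const_zero, Finset.sum_ite_eq,
    Finset.sum_ite_eq', Finset.mem_univ, if_true]
  congr 1
  congr 1 <;> exact Finset.sum_congr rfl (fun _ _ => by ring)

lemma sotF_apply {n : ℕ} (U σ : Matrix (Fin n) (Fin n) ℂ) (p q : Fin n × Fin n) :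
    sot (fun X => Uᴴ * X * U) σ p q
      = (1 / 2 : ℂ) * ((σ * U) p.1 q.2 * star (U q.1 p.2) + U p.1 q.2 * (Uᴴ * σ) p.2 q.1) := by
  simp only [sot, Matrix.smul_apply, Matrix.add_apply, Matrix.mul_apply, smul_eq_mul,
    jamF_apply, kroneckerMap_apply, one_apply, Fintype.sum_prod_type, mul_ite, ite_mul,
    mul_one, one_mul, mul_zero, zero_mul, Finset.sum_ite_eq, Finset.sum_ite_eq',
    Finset.mul_sum, conjTranspose_apply]
  simp only [Finset.sum_ite_irrel, Finset.sum_const_zero, Finset.sum_ite_eq,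
    Finset.sum_ite_eq', Finset.mem_univ, if_true]
  rw [Finset.sum_mul]
  congr 1
  congr 1 <;> exact Finset.sum_congr rfl (fun _ _ => by ring)

/-- For the unitary channel `E = Ad_U` and any density matrix `ρ`, the channel
`F = Ad_{U†}` satisfies the Bayes condition `E ⋆ ρ = S(F ⋆ E(ρ))`. -/
theorem unitary_bayes_condition {n : ℕ} (U ρ : Matrix (Fin n) (Fin n) ℂ)
    (hU : U ∈ Matrix.unitaryGroup (Fin n) ℂ)
    (hρ : ρ.PosSemidef) (hρtr : ρ.trace = 1) :
    sot (fun X => U * X * Uᴴ) ρ = swapM (sot (fun X => Uᴴ * X * U) (U * ρ * Uᴴ)) := by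
  have h1 : Uᴴ * U = 1 := by simpa [Matrix.star_eq_conjTranspose] using hU.1
  have hσU : (U * ρ * Uᴴ) * U = U * ρ := by rw [mul_assoc, h1, mul_one]
  have hUσ : Uᴴ * (U * ρ * Uᴴ) = ρ * Uᴴ := by rw [← mul_assoc, ← mul_assoc, h1, one_mul]
  ext ⟨p, a⟩ ⟨q, b⟩
  simp only [swapM, submatrix_apply, sotE_apply, sotF_apply, hσU, hUσ]
  ring
end
end
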